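/- arXiv:1203.2300 — 6 statements merged into one kernel-verified Lean document; each statement's English description precedes it below -/
import Mathlib

section
/- Let G be a group and let B ⊆ G be a big subset. Let P be the group presented by generators [b], one for each element b ∈ B, subject to the relations [b₁]·[b₂] = [b₁b₂] whenever b₁, b₂ and b₁b₂ all lie in B (i.e., P is the quotient of the free group on the set B by the normal closure of the set of words [b₁]·[b₂]·[b₁b₂]⁻¹ for all b₁, b₂ ∈ B with b₁b₂ ∈ B). Then the canonical group homomorphism P → G induced by [b] ↦ b is an isomorphism (bijective). -/
/-!
Weil's argument. Bigness says that any three elements `x₁, x₂, x₃` of `G` can be written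
simultaneously as `xᵢ = c bᵢ` with `c, bᵢ ∈ B`. In particular every `g ∈ G` is a product `a b` of
two elements of `B`, and any map `ι : B → P` to a group that is multiplicative whenever the
product stays in `B` extends to `G` by `a b ↦ ι a ι b`: a common left factor `c` shows that this
does not depend on the factorisation and that three-letter words collapse to two-letter ones, which
makes the extension a homomorphism. For `ι = [·]` this extension is inverse to `P → G`.
-/

open Pointwise

/-- A subset `B` of a group `G` is *big* if for any `g₁ g₂ g₃ ∈ G` one has
`B⁻¹ ∩ Bg₁ ∩ Bg₂ ∩ Bg₃ ≠ ∅`. -/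
def IsBig {G : Type*} [Group G] (B : Set G) : Prop :=
  ∀ g₁ g₂ g₃ : G, (B⁻¹ ∩ (B * {g₁}) ∩ (B * {g₂}) ∩ (B * {g₃})).Nonempty

namespace IsBig

variable {G : Type*} [Group G] {B : Set G}

lemma exists_inv_mul_mem (hB : IsBig B) (x₁ x₂ x₃ : G) :
    ∃ c ∈ B, c⁻¹ * x₁ ∈ B ∧ c⁻¹ * x₂ ∈ B ∧ c⁻¹ * x₃ ∈ B := by
  obtain ⟨z, ⟨⟨hz, h₁⟩, h₂⟩, h₃⟩ := hB x₁⁻¹ x₂⁻¹ x₃⁻¹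
  simp only [Set.mul_singleton, Set.image_mul_right, inv_inv, Set.mem_preimage] at h₁ h₂ h₃
  exact ⟨z⁻¹, hz, by simpa using h₁, by simpa using h₂, by simpa using h₃⟩

lemma exists_mul_eq (hB : IsBig B) (g : G) : ∃ a b : B, (a : G) * b = g := by
  obtain ⟨c, hc, hg, -⟩ := hB.exists_inv_mul_mem g g g
  exact ⟨⟨c, hc⟩, ⟨_, hg⟩, mul_inv_cancel_left c g⟩

section PartialHom

variable {P : Type*} [Group P] {ι : B → P} (hι : ∀ a b c : B, (a : G) * b = c → ι a * ι b = ι c)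
include hι

lemma mul_eq_mul_of_mul_eq (hB : IsBig B) {a b a' b' : B} (h : (a : G) * b = a' * b') :
    ι a * ι b = ι a' * ι b' := by
  obtain ⟨c, hc, ha, ha', hab⟩ := hB.exists_inv_mul_mem a a' (a * b)
  have through_c : ∀ {x y : B}, (x : G) * y = a * b → c⁻¹ * x ∈ B →
      ι x * ι y = ι ⟨c, hc⟩ * ι ⟨_, hab⟩ := by
    intro x y hxy hx
    rw [← hι ⟨c, hc⟩ ⟨_, hx⟩ x (mul_inv_cancel_left c x), mul_assoc,
      hι ⟨_, hx⟩ y ⟨_, hab⟩ (by simp [mul_assoc, hxy])]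
  rw [through_c rfl ha, through_c h.symm ha']

lemma exists_mul_mul_eq_mul (hB : IsBig B) (a b d : B) :
    ∃ c e : B, (c : G) * e = a * b * d ∧ ι a * ι b * ι d = ι c * ι e := by
  obtain ⟨c, hc, ha, hab, habd⟩ := hB.exists_inv_mul_mem a (a * b) (a * b * d)
  refine ⟨⟨c, hc⟩, ⟨_, habd⟩, mul_inv_cancel_left c _, ?_⟩
  rw [← hι ⟨c, hc⟩ ⟨_, ha⟩ a (mul_inv_cancel_left c a), mul_assoc (ι ⟨c, hc⟩),
    hι ⟨_, ha⟩ b ⟨_, hab⟩ (by simp [mul_assoc]), mul_assoc,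
    hι ⟨_, hab⟩ d ⟨_, habd⟩ (by simp [mul_assoc])]

theorem exists_monoidHom_extension (hB : IsBig B) : ∃ ψ : G →* P, ∀ b : B, ψ b = ι b := by
  choose U V hUV using hB.exists_mul_eq
  let f : G → P := fun g ↦ ι (U g) * ι (V g)
  have hf : ∀ {g : G} (a b : B), (a : G) * b = g → f g = ι a * ι b := fun a b hab ↦
    mul_eq_mul_of_mul_eq hι hB (by rw [hUV, hab])
  have hf_mul : ∀ g₁ g₂, f (g₁ * g₂) = f g₁ * f g₂ := by
    intro g₁ g₂
    obtain ⟨c, d, hcd, hc⟩ := exists_mul_mul_eq_mul hι hB (U g₁) (V g₁) (U g₂)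
    obtain ⟨c', d', hcd', hc'⟩ := exists_mul_mul_eq_mul hι hB c d (V g₂)
    rw [hf c' d' (by rw [hcd', hcd, hUV, mul_assoc, hUV]), ← hc', ← hc]
    simp only [f, mul_assoc]
  exact ⟨MonoidHom.mk' f hf_mul, fun b ↦ hι _ _ _ (hUV b)⟩

end PartialHom

end IsBig

lemma PresentedGroup.of_mul_of_eq_of {α : Type*} {rels : Set (FreeGroup α)} {a b c : α}
    (h : FreeGroup.of a * FreeGroup.of b * (FreeGroup.of c)⁻¹ ∈ rels) :
    (of a * of b : PresentedGroup rels) = of c :=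
  mk_eq_mk_of_mul_inv_mem h

/-- Weil's lemma (Lemma `big-lem`(i) of the paper): if `B ⊆ G` is a big subset, then the
group presented by generators `[b]`, `b ∈ B`, with relations `[b₁][b₂] = [b₁b₂]` whenever
`b₁, b₂, b₁b₂ ∈ B`, maps isomorphically onto `G` via `[b] ↦ b`. -/
theorem big_subset_presentation_bijective {G : Type*} [Group G] (B : Set G) (hB : IsBig B)
    (rels : Set (FreeGroup B))
    (hrels : rels = {w : FreeGroup B | ∃ (b₁ b₂ : B) (h : (b₁ : G) * (b₂ : G) ∈ B),
      w = FreeGroup.of b₁ * FreeGroup.of b₂ * (FreeGroup.of (⟨(b₁ : G) * (b₂ : G), h⟩ : B))⁻¹})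
    (h : ∀ r ∈ rels, FreeGroup.lift (fun b : B => (b : G)) r = 1) :
    Function.Bijective (PresentedGroup.toGroup h) := by
  have hof : ∀ a b c : B, (a : G) * b = c →
      (PresentedGroup.of a * PresentedGroup.of b : PresentedGroup rels) = PresentedGroup.of c := by
    rintro a b ⟨c, hc⟩ rfl
    exact PresentedGroup.of_mul_of_eq_of (hrels ▸ ⟨a, b, hc, rfl⟩)
  obtain ⟨ψ, hψ⟩ := hB.exists_monoidHom_extension hof
  have hψ_left : ψ.comp (PresentedGroup.toGroup h) = MonoidHom.id _ :=
    PresentedGroup.ext fun b ↦ by simp [hψ]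
  refine Function.bijective_iff_has_inverse.mpr ⟨ψ, DFunLike.congr_fun hψ_left, fun g ↦ ?_⟩
  obtain ⟨a, b, rfl⟩ := hB.exists_mul_eq g
  simp [hψ]
end

section
/- Let g ≥ 1 and let z₁, …, z_g ∈ ℂ be purely imaginary and nonzero, i.e. Re(z_j) = 0 and Im(z_j) ≠ 0 for all j. Let m be the number of indices j with Im(z_j) > 0. Define f : ℝ → ℝ by f(t) = Σ_{j=1}^{g} arg(t − z_j), where arg denotes the principal argument (note each summand is well defined and continuous in t, since t − z_j has nonzero imaginary part). Then for all real numbers t₁, t₂ with 0 ≤ t₁ < t₂ one has the strict inequalities f(t₁) − (g − m)·π/2 < f(t₂) < f(t₁) + m·π/2. -/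
/-!
For `c ≠ 0` the argument of `t - c i` is `arctan (t / c) ∓ π / 2`, so each summand of `f`
changes between `t₁` and `t₂` by `arctan (t₂ / c) - arctan (t₁ / c)`. For `0 ≤ t₁ < t₂` this
increment lies in `(0, π / 2)` when `c > 0` and in `(-π / 2, 0)` when `c < 0`; summing the strict
bounds over the `m` roots in the upper half-plane and the `g - m` in the lower one gives the claim.
-/

open Complex Real

lemma Complex.arg_ofReal_sub_mul_I_of_pos {c : ℝ} (hc : 0 < c) (t : ℝ) :
    arg (t - c * I) = Real.arctan (t / c) - π / 2 := by
  have hθ : Real.arctan (t / c) - π / 2 ∈ Set.Ioc (-π) π := by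
    constructor <;> linarith [neg_pi_div_two_lt_arctan (t / c), arctan_lt_pi_div_two (t / c)]
  have hpolar : (t : ℂ) - c * I = ((c * √(1 + (t / c) ^ 2) : ℝ) : ℂ) *
      (cos ↑(Real.arctan (t / c) - π / 2) + sin ↑(Real.arctan (t / c) - π / 2) * I) := by
    rw [← ofReal_cos, ← ofReal_sin, Real.cos_sub_pi_div_two, Real.sin_sub_pi_div_two,
      Real.sin_arctan, Real.cos_arctan]
    apply Complex.ext <;> simp <;> field_simp
  rw [hpolar, arg_mul_cos_add_sin_mul_I (by positivity) hθ]

lemma Complex.arg_ofReal_sub_mul_I_of_neg {c : ℝ} (hc : c < 0) (t : ℝ) :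
    arg (t - c * I) = Real.arctan (t / c) + π / 2 := by
  have hθ : Real.arctan (t / c) + π / 2 ∈ Set.Ioc (-π) π := by
    constructor <;> linarith [neg_pi_div_two_lt_arctan (t / c), arctan_lt_pi_div_two (t / c)]
  have hc0 := hc.ne
  have hs : 0 < √(1 + (t / c) ^ 2) := by positivity
  have hpolar : (t : ℂ) - c * I = ((-c * √(1 + (t / c) ^ 2) : ℝ) : ℂ) *
      (cos ↑(Real.arctan (t / c) + π / 2) + sin ↑(Real.arctan (t / c) + π / 2) * I) := by
    rw [← ofReal_cos, ← ofReal_sin, Real.cos_add_pi_div_two, Real.sin_add_pi_div_two,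
      Real.sin_arctan, Real.cos_arctan]
    apply Complex.ext <;> simp <;> field_simp
  have hr : 0 < -c * √(1 + (t / c) ^ 2) := mul_pos (neg_pos.mpr hc) hs
  rw [hpolar, arg_mul_cos_add_sin_mul_I hr hθ]

lemma Complex.arg_ofReal_sub_sub_arg_ofReal_sub {z : ℂ} (hre : z.re = 0) (him : z.im ≠ 0)
    (t₁ t₂ : ℝ) :
    arg (t₂ - z) - arg (t₁ - z) = Real.arctan (t₂ / z.im) - Real.arctan (t₁ / z.im) := by
  have hz : z = z.im * I := by apply Complex.ext <;> simp [hre]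
  rw [hz]
  simp only [mul_im, ofReal_re, I_im, mul_one, ofReal_im, I_re, mul_zero, add_zero]
  rcases him.lt_or_gt with hneg | hpos
  · rw [arg_ofReal_sub_mul_I_of_neg hneg, arg_ofReal_sub_mul_I_of_neg hneg]; ring
  · rw [arg_ofReal_sub_mul_I_of_pos hpos, arg_ofReal_sub_mul_I_of_pos hpos]; ring

lemma Real.arctan_div_sub_arctan_div_mem_Ioo_of_pos {c t₁ t₂ : ℝ} (hc : 0 < c) (h₀ : 0 ≤ t₁)
    (h : t₁ < t₂) : arctan (t₂ / c) - arctan (t₁ / c) ∈ Set.Ioo 0 (π / 2) := by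
  have hmono : arctan (t₁ / c) < arctan (t₂ / c) :=
    arctan_strictMono (div_lt_div_of_pos_right h hc)
  have hnonneg : 0 ≤ arctan (t₁ / c) := arctan_nonneg.mpr (div_nonneg h₀ hc.le)
  constructor <;> linarith [arctan_lt_pi_div_two (t₂ / c)]

lemma Real.arctan_div_sub_arctan_div_mem_Ioo_of_neg {c t₁ t₂ : ℝ} (hc : c < 0) (h₀ : 0 ≤ t₁)
    (h : t₁ < t₂) : arctan (t₂ / c) - arctan (t₁ / c) ∈ Set.Ioo (-(π / 2)) 0 := by
  have hanti : arctan (t₂ / c) < arctan (t₁ / c) :=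
    arctan_strictMono (div_lt_div_of_neg_of_lt hc h)
  have hnonpos : arctan (t₁ / c) ≤ 0 := by
    simpa using arctan_strictMono.monotone (div_nonpos_of_nonneg_of_nonpos h₀ hc.le)
  constructor <;> linarith [neg_pi_div_two_lt_arctan (t₂ / c)]

/-- The analytic core of Lemma `Arg-ineq-lem`(i): if `z₁, …, z_g` are nonzero purely
imaginary complex numbers, `m` of which lie in the upper half-plane, then the function
`f(t) = Σⱼ arg(t − zⱼ)` satisfies `f(t₁) − (g−m)π/2 < f(t₂) < f(t₁) + mπ/2` for
`0 ≤ t₁ < t₂`. -/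
theorem sum_arg_bounds (g : ℕ) (hg : 1 ≤ g) (z : Fin g → ℂ)
    (hre : ∀ j, (z j).re = 0) (him : ∀ j, (z j).im ≠ 0)
    (m : ℕ) (hm : m = (Finset.univ.filter fun j => 0 < (z j).im).card)
    (f : ℝ → ℝ) (hf : ∀ t : ℝ, f t = ∑ j, Complex.arg ((t : ℂ) - z j))
    (t₁ t₂ : ℝ) (ht₁ : 0 ≤ t₁) (ht : t₁ < t₂) :
    f t₁ - ((g : ℝ) - (m : ℝ)) * (Real.pi / 2) < f t₂ ∧
      f t₂ < f t₁ + (m : ℝ) * (Real.pi / 2) := by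
  set u : Fin g → ℝ := fun j => if 0 < (z j).im then π / 2 else 0
  have hu : ∑ j, u j = m * (π / 2) := by
    simp only [u, Finset.sum_ite, Finset.sum_const_zero, Finset.sum_const, hm, nsmul_eq_mul,
      add_zero]
  have hstep : ∀ j, u j - π / 2 < arg (t₂ - z j) - arg (t₁ - z j) ∧
      arg (t₂ - z j) - arg (t₁ - z j) < u j := by
    intro j
    rw [arg_ofReal_sub_sub_arg_ofReal_sub (hre j) (him j)]
    by_cases hpos : 0 < (z j).im
    · obtain ⟨hlo, hhi⟩ := arctan_div_sub_arctan_div_mem_Ioo_of_pos hpos ht₁ ht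
      simp only [u, if_pos hpos]; constructor <;> linarith
    · have hneg := lt_of_le_of_ne (not_lt.mp hpos) (him j)
      obtain ⟨hlo, hhi⟩ := arctan_div_sub_arctan_div_mem_Ioo_of_neg hneg ht₁ ht
      simp only [u, if_neg hpos]; constructor <;> linarith
  have hne : (Finset.univ : Finset (Fin g)).Nonempty := ⟨⟨0, hg⟩, Finset.mem_univ _⟩
  have hlower := Finset.sum_lt_sum_of_nonempty hne fun j _ => (hstep j).1
  have hupper := Finset.sum_lt_sum_of_nonempty hne fun j _ => (hstep j).2
  simp only [Finset.sum_sub_distrib, ← hf, hu, Finset.sum_const, Finset.card_univ,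
    Fintype.card_fin, nsmul_eq_mul] at hlower hupper
  constructor <;> linarith
end

section
/- Let F be a totally real number field with ring of integers R, and let I ⊆ R be a nonzero ideal. Then the action of SL₂(R) on surjective R-module homomorphisms R² → I is transitive: if f, g : R² → R are R-linear maps whose images are both equal to I, then there exists a matrix γ ∈ SL₂(R) (a 2×2 matrix over R of determinant 1) such that f = g ∘ γ, where γ acts on R² by matrix-vector multiplication. -/
/-!
Write `a` and `c` for the rows `(f e₀, f e₁)` and `(g e₀, g e₁)`; both generate `I`. As `I` is
invertible, there are `s, t ∈ (I⁻¹)²` with `a ⬝ s = 1 = c ⬝ t`, so `F = !![a₀, a₁; -s₁, s₀]` and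
`G = !![c₀, c₁; -t₁, t₀]` lie in `SL₂(K)` with first rows in `I` and second rows in `I⁻¹`.
Then `γ = G⁻¹ F` satisfies `c γ = a`, and its entries lie in `I⁻¹ I = R`.
-/

open Matrix

section LinearFunctionals

variable {R n : Type*} [CommRing R] [Fintype n] [DecidableEq n]

theorem LinearEquiv.piRing_comp_mulVecLin (g : (n → R) →ₗ[R] R) (A : Matrix n n R) :
    LinearEquiv.piRing R R n R (g ∘ₗ A.mulVecLin) = LinearEquiv.piRing R R n R g ᵥ* A := by
  ext i
  have hg := (LinearEquiv.piRing R R n R).symm_apply_apply g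
  rw [LinearEquiv.piRing_apply, LinearMap.comp_apply, Matrix.mulVecLin_apply, mulVec_single_one,
    ← hg, LinearEquiv.piRing_symm_apply]
  simp [vecMul, dotProduct, mul_comm]

theorem LinearMap.range_eq_span_piRing (f : (n → R) →ₗ[R] R) :
    LinearMap.range f = Ideal.span (Set.range (LinearEquiv.piRing R R n R f)) := by
  rw [LinearMap.range_eq_map, ← (Pi.basisFun R n).span_eq, Submodule.map_span, ← Set.range_comp]
  simp only [Function.comp_def, Pi.basisFun_apply]
  rfl

end LinearFunctionals

section Bezout

open FractionalIdeal nonZeroDivisors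

variable {R K ι : Type*} [CommRing R] [IsDedekindDomain R] [Field K] [Algebra R K]
  [IsFractionRing R K] [Fintype ι]

theorem exists_mem_inv_dotProduct_eq_one (v : ι → R) (hv : Ideal.span (Set.range v) ≠ ⊥) :
    ∃ w : ι → K, (∀ i, w i ∈ ((Ideal.span (Set.range v) : Ideal R) : FractionalIdeal R⁰ K)⁻¹) ∧
      (algebraMap R K ∘ v) ⬝ᵥ w = 1 := by
  set J : FractionalIdeal R⁰ K := ↑(Ideal.span (Set.range v))
  have hJ : (J : Submodule R K) = ⨆ i, R ∙ algebraMap R K (v i) := by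
    rw [coe_coeIdeal, IsLocalization.coeSubmodule_span, ← Set.range_comp,
      Submodule.span_range_eq_iSup]
    rfl
  have h1 : (1 : K) ∈ (J : Submodule R K) * (J⁻¹ : FractionalIdeal R⁰ K) := by
    rw [← coe_mul, mul_inv_cancel₀ (coeIdeal_ne_zero.mpr hv)]
    exact one_mem_one _
  rw [hJ, Submodule.iSup_mul, Submodule.mem_iSup_iff_exists_finsupp] at h1
  obtain ⟨c, hc, hc1⟩ := h1
  choose w hw hcw using fun i ↦ Submodule.mem_span_singleton_mul.mp (hc i)
  refine ⟨w, hw, ?_⟩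
  rw [← hc1, Finsupp.sum_fintype _ _ (fun _ ↦ rfl)]
  simp [dotProduct, hcw]

end Bezout

section TransitionMatrix

variable {K : Type*} [CommRing K]

/-- `G⁻¹ F` for `F = !![x 0, x 1; -y 1, y 0]` and `G = !![x' 0, x' 1; -y' 1, y' 0]`, the inverse
being the adjugate when `x' ⬝ᵥ y' = 1`. -/
def transitionMatrix (x y x' y' : Fin 2 → K) : Matrix (Fin 2) (Fin 2) K :=
  !![y' 0, -x' 1; y' 1, x' 0] * !![x 0, x 1; -y 1, y 0]

theorem det_transitionMatrix (x y x' y' : Fin 2 → K) :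
    (transitionMatrix x y x' y').det = (x' ⬝ᵥ y') * (x ⬝ᵥ y) := by
  simp only [transitionMatrix, det_mul, det_fin_two_of, dotProduct, Fin.sum_univ_two]
  ring

theorem vecMul_transitionMatrix (x y x' y' : Fin 2 → K) :
    x' ᵥ* transitionMatrix x y x' y' = (x' ⬝ᵥ y') • x := by
  ext j
  fin_cases j <;> simp [transitionMatrix, vecMul, dotProduct, Fin.sum_univ_two] <;> ring

theorem transitionMatrix_mem_mul {R : Type*} [CommRing R] [Algebra R K] {P Q : Submodule R K}
    {x y x' y' : Fin 2 → K} (hx : ∀ i, x i ∈ P) (hy : ∀ i, y i ∈ Q) (hx' : ∀ i, x' i ∈ P)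
    (hy' : ∀ i, y' i ∈ Q) (i j : Fin 2) : transitionMatrix x y x' y' i j ∈ Q * P := by
  have h : ∀ a ∈ Q, ∀ b ∈ P, ∀ c ∈ P, ∀ d ∈ Q, a * b + c * d ∈ Q * P := fun a ha b hb c hc d hd ↦
    add_mem (Submodule.mul_mem_mul ha hb) (mul_comm c d ▸ Submodule.mul_mem_mul hd hc)
  fin_cases i <;> fin_cases j <;> simp only [transitionMatrix, mul_fin_two, of_apply, cons_val',
    empty_val', cons_val_fin_one] <;> apply h <;> simp [hx, hy, hx', hy']

end TransitionMatrix

theorem Matrix.SpecialLinearGroup.exists_map_eq {R S n : Type*} [CommRing R] [CommRing S]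
    [Fintype n] [DecidableEq n] {f : R →+* S} (hf : Function.Injective f) (M : Matrix n n S)
    (hM : ∀ i j, M i j ∈ f.range) (hdet : M.det = 1) :
    ∃ γ : SpecialLinearGroup n R, (γ : Matrix n n R).map f = M := by
  choose A hA using hM
  have hAM : (of A).map f = M := Matrix.ext hA
  exact ⟨⟨of A, hf (by rw [RingHom.map_det, RingHom.mapMatrix_apply, hAM, hdet, map_one])⟩, hAM⟩

open FractionalIdeal nonZeroDivisors in
theorem exists_SL2_vecMul_eq {R : Type*} [CommRing R] [IsDedekindDomain R] {u v : Fin 2 → R}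
    (huv : Ideal.span (Set.range u) = Ideal.span (Set.range v))
    (hu : Ideal.span (Set.range u) ≠ ⊥) :
    ∃ γ : SpecialLinearGroup (Fin 2) R, u ᵥ* γ = v := by
  let K := FractionRing R
  set J : FractionalIdeal R⁰ K := ↑(Ideal.span (Set.range u))
  have mem_J : ∀ w : Fin 2 → R, Ideal.span (Set.range w) = Ideal.span (Set.range u) →
      ∀ i, algebraMap R K (w i) ∈ J := fun w hw i ↦
    (mem_coeIdeal _).mpr ⟨w i, hw ▸ Ideal.subset_span ⟨i, rfl⟩, rfl⟩
  obtain ⟨y', hy', hy'u⟩ := exists_mem_inv_dotProduct_eq_one (K := K) u hu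
  obtain ⟨y, hy, hyv⟩ := exists_mem_inv_dotProduct_eq_one (K := K) v (huv ▸ hu)
  rw [← huv] at hy
  set M := transitionMatrix (algebraMap R K ∘ v) y (algebraMap R K ∘ u) y'
  have hM : ∀ i j, M i j ∈ (algebraMap R K).range := fun i j ↦ by
    have h := transitionMatrix_mem_mul (P := (J : Submodule R K))
      (Q := ((J⁻¹ : FractionalIdeal R⁰ K) : Submodule R K))
      (mem_J v huv.symm) hy (mem_J u rfl) hy' i j
    rw [← coe_mul, mul_comm, mul_inv_cancel₀ (coeIdeal_ne_zero.mpr hu)] at h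
    exact (mem_one_iff _).mp h
  obtain ⟨γ, hγ⟩ := SpecialLinearGroup.exists_map_eq (IsFractionRing.injective R K) M hM
    (by rw [det_transitionMatrix, hyv, hy'u, one_mul])
  refine ⟨γ, funext fun i ↦ IsFractionRing.injective R K ?_⟩
  rw [RingHom.map_vecMul, hγ, vecMul_transitionMatrix, hy'u, one_smul]
  rfl

open NumberField

theorem SL2_transitive_on_surjections_onto_ideal_general
    (K : Type*) [Field K] [NumberField K]
    (I : Ideal (𝓞 K)) (hI : I ≠ ⊥)
    (f g : (Fin 2 → 𝓞 K) →ₗ[𝓞 K] 𝓞 K)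
    (hf : LinearMap.range f = I) (hg : LinearMap.range g = I) :
    ∃ γ : Matrix.SpecialLinearGroup (Fin 2) (𝓞 K),
      f = g.comp ((γ : Matrix (Fin 2) (Fin 2) (𝓞 K)).mulVecLin) := by
  rw [LinearMap.range_eq_span_piRing] at hf hg
  obtain ⟨γ, hγ⟩ := exists_SL2_vecMul_eq (hg.trans hf.symm) (hg ▸ hI)
  refine ⟨γ, (LinearEquiv.piRing (𝓞 K) (𝓞 K) (Fin 2) (𝓞 K)).injective ?_⟩
  rw [LinearEquiv.piRing_comp_mulVecLin, hγ]

/-- Lemma `ideal-class-lem` of the paper: if `R` is the ring of integers of a totally real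
number field and `I ⊆ R` is a nonzero ideal, then `SL₂(R)` acts transitively on surjective
`R`-module homomorphisms `R² → I`. -/
theorem SL2_transitive_on_surjections_onto_ideal
    (K : Type*) [Field K] [NumberField K]
    (htotallyReal : ∀ φ : K →+* ℂ, ∀ x : K, (φ x).im = 0)
    (I : Ideal (𝓞 K)) (hI : I ≠ ⊥)
    (f g : (Fin 2 → 𝓞 K) →ₗ[𝓞 K] 𝓞 K)
    (hf : LinearMap.range f = I) (hg : LinearMap.range g = I) :
    ∃ γ : Matrix.SpecialLinearGroup (Fin 2) (𝓞 K),
      f = g.comp ((γ : Matrix (Fin 2) (Fin 2) (𝓞 K)).mulVecLin) :=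
  SL2_transitive_on_surjections_onto_ideal_general K I hI f g hf hg
end

section
/- Let F be a totally real number field with ring of integers R. Let a, b, a', b' ∈ R with (a, b) ≠ (0, 0) and (a', b') ≠ (0, 0). Then the following are equivalent: (1) there exist γ ∈ SL₂(R) and a nonzero c ∈ F such that, in F², γ·(a, b)ᵀ = (c·a', c·b')ᵀ (i.e., the points (a : b) and (a' : b') of the projective line ℙ¹(F) lie in the same SL₂(R)-orbit); (2) the nonzero ideals aR + bR and a'R + b'R of R define the same class in the ideal class group of R. -/
/-!
An `SL₂(R)`-matrix and its inverse have integral entries, so both preserve the `R`-span of the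
coordinates; hence the orbit of `(x, y)` determines the module `R x + R y ⊆ K`, and rescaling
turns this into the ideal class. Conversely, if `J = R x + R y = R u + R v` is nonzero it is
invertible, `R` being Dedekind. Writing `1 = p x + q y = p' u + q' v` with `p, q, p', q' ∈ J⁻¹`,
the matrix `[[u, -q'], [v, p']] * [[p, q], [-y, x]]` has determinant `1`, entries in
`J J⁻¹ = R`, and sends `(x, y)` to `(u, v)`.
-/

open NumberField Submodule

open scoped Matrix MatrixGroups nonZeroDivisors

section

variable {R A : Type*} [CommRing R] [CommRing A] [Algebra R A]

theorem span_range_map_mulVec_le {m n : Type*} [Fintype n] (M : Matrix m n R) (v : n → A) :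
    span R (Set.range (M.map (algebraMap R A) *ᵥ v)) ≤ span R (Set.range v) := by
  rw [span_le]
  rintro _ ⟨i, rfl⟩
  simp only [Matrix.mulVec, dotProduct, Matrix.map_apply, ← Algebra.smul_def]
  exact sum_mem fun j _ => smul_mem _ _ (subset_span ⟨j, rfl⟩)

theorem span_range_SL_map_mulVec {n : Type*} [Fintype n] [DecidableEq n]
    (γ : Matrix.SpecialLinearGroup n R) (v : n → A) :
    span R (Set.range ((γ : Matrix n n R).map (algebraMap R A) *ᵥ v)) = span R (Set.range v) := by
  refine le_antisymm (span_range_map_mulVec_le _ v) ?_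
  have hv : v = ((γ⁻¹ : Matrix.SpecialLinearGroup n R) : Matrix n n R).map (algebraMap R A) *ᵥ
      ((γ : Matrix n n R).map (algebraMap R A) *ᵥ v) := by
    rw [Matrix.mulVec_mulVec, ← Matrix.map_mul, ← Matrix.SpecialLinearGroup.coe_mul,
      inv_mul_cancel, Matrix.SpecialLinearGroup.coe_one, Matrix.map_one _ (map_zero _) (map_one _),
      Matrix.one_mulVec]
  conv_lhs => rw [hv]
  exact span_range_map_mulVec_le _ _

theorem span_pair_eq_of_SL2_map_mulVec_eq {γ : SL(2, R)} {x y u v : A}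
    (h : (γ : Matrix (Fin 2) (Fin 2) R).map (algebraMap R A) *ᵥ ![x, y] = ![u, v]) :
    span R {u, v} = span R {x, y} := by
  simpa only [h, Matrix.range_cons_cons_empty] using span_range_SL_map_mulVec γ ![x, y]

theorem exists_mul_add_mul_eq_one {I : Submodule R A} {x y : A} (h : I * span R {x, y} = 1) :
    ∃ p ∈ I, ∃ q ∈ I, p * x + q * y = 1 := by
  have h1 : (1 : A) ∈ I * span R {x} ⊔ I * span R {y} := by
    rw [← Submodule.mul_sup, ← span_union, Set.singleton_union, h]
    exact one_le.1 le_rfl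
  obtain ⟨_, hpx, _, hqy, hpq⟩ := mem_sup.1 h1
  obtain ⟨p, hp, rfl⟩ := mem_mul_span_singleton.1 hpx
  obtain ⟨q, hq, rfl⟩ := mem_mul_span_singleton.1 hqy
  exact ⟨p, hp, q, hq, hpq⟩

theorem Matrix.SpecialLinearGroup.exists_map_algebraMap_eq [FaithfulSMul R A] {n : Type*}
    [Fintype n] [DecidableEq n] {M : Matrix n n A} (hM : ∀ i j, M i j ∈ (1 : Submodule R A))
    (hdet : M.det = 1) :
    ∃ γ : Matrix.SpecialLinearGroup n R, (γ : Matrix n n R).map (algebraMap R A) = M := by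
  choose N hN using fun i j => mem_one.1 (hM i j)
  have hmap : (Matrix.of N).map (algebraMap R A) = M := Matrix.ext hN
  refine ⟨⟨Matrix.of N, FaithfulSMul.algebraMap_injective R A ?_⟩, hmap⟩
  rw [RingHom.map_det, RingHom.mapMatrix_apply, hmap, hdet, map_one]

theorem exists_SL2_map_mulVec_eq [FaithfulSMul R A] {I : Submodule R A} {x y u v : A}
    (hI : I * span R {x, y} = 1) (hspan : span R {x, y} = span R {u, v}) :
    ∃ γ : SL(2, R), (γ : Matrix (Fin 2) (Fin 2) R).map (algebraMap R A) *ᵥ ![x, y] = ![u, v] := by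
  obtain ⟨p, hp, q, hq, hpq⟩ := exists_mul_add_mul_eq_one hI
  obtain ⟨p', hp', q', hq', hpq'⟩ := exists_mul_add_mul_eq_one (hspan ▸ hI)
  have hI' : span R {x, y} * I = 1 := mul_comm I _ ▸ hI
  have hx : x ∈ span R {x, y} := subset_span (by simp)
  have hy : y ∈ span R {x, y} := subset_span (by simp)
  have hu : u ∈ span R {x, y} := hspan ▸ subset_span (by simp)
  have hv : v ∈ span R {x, y} := hspan ▸ subset_span (by simp)
  set B : Matrix (Fin 2) (Fin 2) A := !![u, -q'; v, p']
  set C : Matrix (Fin 2) (Fin 2) A := !![p, q; -y, x]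
  have hB₀ : ∀ i, B i 0 ∈ span R {x, y} := by simp [B, Fin.forall_fin_two, hu, hv]
  have hB₁ : ∀ i, B i 1 ∈ I := by simp [B, Fin.forall_fin_two, hp', hq']
  have hC₀ : ∀ j, C 0 j ∈ I := by simp [C, Fin.forall_fin_two, hp, hq]
  have hC₁ : ∀ j, C 1 j ∈ span R {x, y} := by simp [C, Fin.forall_fin_two, hx, hy]
  have hM_int : ∀ i j, (B * C) i j ∈ (1 : Submodule R A) := fun i j => by
    rw [Matrix.mul_apply, Fin.sum_univ_two]
    exact add_mem (hI' ▸ mul_mem_mul (hB₀ i) (hC₀ j)) (hI ▸ mul_mem_mul (hB₁ i) (hC₁ j))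
  have hM_det : (B * C).det = 1 := by
    rw [Matrix.det_mul, Matrix.det_fin_two_of, Matrix.det_fin_two_of]
    linear_combination (p' * u + q' * v) * hpq + hpq'
  have hC : C *ᵥ ![x, y] = ![1, 0] := by
    ext i
    fin_cases i <;> simp [C, mul_comm x p, mul_comm y q, mul_comm x y, hpq]
  obtain ⟨γ, hγ⟩ := Matrix.SpecialLinearGroup.exists_map_algebraMap_eq hM_int hM_det
  refine ⟨γ, ?_⟩
  rw [hγ, ← Matrix.mulVec_mulVec, hC]
  ext i
  fin_cases i <;> simp [B]

end

section

variable {R K : Type*} [CommRing R] [IsDedekindDomain R] [Field K] [Algebra R K]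
  [IsFractionRing R K]

theorem exists_mul_eq_one_of_fg {J : Submodule R K} (hJ : J.FG) (h0 : J ≠ ⊥) :
    ∃ I : Submodule R K, I * J = 1 := by
  let J' : FractionalIdeal R⁰ K := ⟨J, FractionalIdeal.isFractional_of_fg hJ⟩
  have hJ' : J' ≠ 0 := fun h => h0 (FractionalIdeal.coeToSubmodule_eq_bot.2 h)
  exact ⟨↑J'⁻¹, (FractionalIdeal.coe_mul J'⁻¹ J').symm.trans <| by
    rw [inv_mul_cancel₀ hJ', FractionalIdeal.coe_one]⟩

theorem exists_SL2_map_mulVec_eq_iff_span_pair_eq (x y u v : K) :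
    (∃ γ : SL(2, R), (γ : Matrix (Fin 2) (Fin 2) R).map (algebraMap R K) *ᵥ ![x, y] = ![u, v]) ↔
      span R {x, y} = span R {u, v} := by
  refine ⟨fun ⟨γ, hγ⟩ => (span_pair_eq_of_SL2_map_mulVec_eq hγ).symm, fun hspan => ?_⟩
  by_cases h0 : span R {x, y} = ⊥
  · obtain ⟨rfl, rfl⟩ : x = 0 ∧ y = 0 := by simpa using h0
    obtain ⟨rfl, rfl⟩ : u = 0 ∧ v = 0 := by simpa using (hspan ▸ h0 : span R {u, v} = ⊥)
    exact ⟨1, by simp⟩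
  · obtain ⟨I, hI⟩ := exists_mul_eq_one_of_fg (fg_span (Set.toFinite _)) h0
    exact exists_SL2_map_mulVec_eq hI hspan

end

theorem SL2_orbit_iff_same_ideal_class_general
    (K : Type*) [Field K] [NumberField K]
    (a b a' b' : 𝓞 K) :
    (∃ (γ : Matrix.SpecialLinearGroup (Fin 2) (𝓞 K)) (c : K), c ≠ 0 ∧
        ((γ : Matrix (Fin 2) (Fin 2) (𝓞 K)).map (algebraMap (𝓞 K) K)).mulVec
            ![algebraMap (𝓞 K) K a, algebraMap (𝓞 K) K b] =
          c • ![algebraMap (𝓞 K) K a', algebraMap (𝓞 K) K b']) ↔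
      (∃ c : K, c ≠ 0 ∧
        Submodule.span (𝓞 K) {c * algebraMap (𝓞 K) K a, c * algebraMap (𝓞 K) K b} =
          Submodule.span (𝓞 K) {algebraMap (𝓞 K) K a', algebraMap (𝓞 K) K b'}) := by
  set f := algebraMap (𝓞 K) K
  have hrescale : ∀ c : K, c ≠ 0 →
      ((∃ γ : SL(2, 𝓞 K), (γ : Matrix (Fin 2) (Fin 2) (𝓞 K)).map f *ᵥ ![f a, f b] =
          c • ![f a', f b']) ↔
        span (𝓞 K) {c⁻¹ * f a, c⁻¹ * f b} = span (𝓞 K) {f a', f b'}) := by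
    intro c hc
    rw [← exists_SL2_map_mulVec_eq_iff_span_pair_eq]
    refine exists_congr fun γ => ?_
    have : ![c⁻¹ * f a, c⁻¹ * f b] = c⁻¹ • ![f a, f b] := by simp
    rw [this, Matrix.mulVec_smul, inv_smul_eq_iff₀ hc]
  constructor
  · rintro ⟨γ, c, hc, hγ⟩
    exact ⟨c⁻¹, inv_ne_zero hc, (hrescale c hc).1 ⟨γ, hγ⟩⟩
  · rintro ⟨c, hc, hspan⟩
    obtain ⟨γ, hγ⟩ := (hrescale c⁻¹ (inv_ne_zero hc)).2 (by rwa [inv_inv])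
    exact ⟨γ, c⁻¹, inv_ne_zero hc, hγ⟩

/-- From the proof of Proposition `class-prop`: for the ring of integers `R` of a totally
real number field `F`, two points `(a : b)` and `(a' : b')` of `ℙ¹(F)` lie in the same
`SL₂(R)`-orbit if and only if the ideals `aR + bR` and `a'R + b'R` define the same class
in the ideal class group of `R`. -/
theorem SL2_orbit_iff_same_ideal_class
    (K : Type*) [Field K] [NumberField K]
    (htotallyReal : ∀ φ : K →+* ℂ, ∀ x : K, (φ x).im = 0)
    (a b a' b' : 𝓞 K) (hab : (a, b) ≠ (0, 0)) (hab' : (a', b') ≠ (0, 0)) :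
    (∃ (γ : Matrix.SpecialLinearGroup (Fin 2) (𝓞 K)) (c : K), c ≠ 0 ∧
        ((γ : Matrix (Fin 2) (Fin 2) (𝓞 K)).map (algebraMap (𝓞 K) K)).mulVec
            ![algebraMap (𝓞 K) K a, algebraMap (𝓞 K) K b] =
          c • ![algebraMap (𝓞 K) K a', algebraMap (𝓞 K) K b']) ↔
      (∃ c : K, c ≠ 0 ∧
        Submodule.span (𝓞 K) {c * algebraMap (𝓞 K) K a, c * algebraMap (𝓞 K) K b} =
          Submodule.span (𝓞 K) {algebraMap (𝓞 K) K a', algebraMap (𝓞 K) K b'}) :=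
  SL2_orbit_iff_same_ideal_class_general K a b a' b'
end

section
/- Let A and B be n×n matrices with complex entries. If det(A − X) = det(B − X) for every n×n complex matrix X, then A = B. -/
/-!
Put `D = A - B`, so that `det (D + C) = det C` for every `C`. Rescaling gives
`det (C + t • D) = det C` for every scalar `t`, so for invertible `M` the polynomial
`t ↦ det (1 + t • (M * D))` is constant and its linear coefficient `trace (M * D)` vanishes.
Every matrix differs from an invertible one by a scalar matrix, and `trace D = 0`, so
`trace (M * D) = 0` for all `M`; nondegeneracy of the trace pairing gives `D = 0`.
-/

namespace Matrix

open Polynomial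

variable {n K : Type*} [Fintype n] [DecidableEq n] [Field K]

theorem det_add_smul_eq_of_forall_det_add_eq {D : Matrix n n K}
    (hD : ∀ C, det (D + C) = det C) (t : K) (C : Matrix n n K) :
    det (C + t • D) = det C := by
  rcases eq_or_ne t 0 with rfl | ht
  · rw [zero_smul, add_zero]
  have hscale : C + t • D = t • (D + t⁻¹ • C) := by
    rw [smul_add, smul_smul, mul_inv_cancel₀ ht, one_smul, add_comm]
  rw [hscale, det_smul, hD, det_smul, ← mul_assoc, ← mul_pow, mul_inv_cancel₀ ht, one_pow,
    one_mul]

theorem det_one_add_smul_mul_eq_one_of_forall_det_add_eq {D : Matrix n n K}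
    (hD : ∀ C, det (D + C) = det C) {M : Matrix n n K} (hM : IsUnit M.det) (t : K) :
    det (1 + t • (M * D)) = 1 := by
  have hfactor : 1 + t • (M * D) = M * (M⁻¹ + t • D) := by
    rw [mul_add, mul_nonsing_inv M hM, mul_smul_comm]
  rw [hfactor, det_mul, det_add_smul_eq_of_forall_det_add_eq hD, ← det_mul,
    mul_nonsing_inv M hM, det_one]

theorem trace_eq_zero_of_forall_det_one_add_smul_eq_one {R : Type*} [CommRing R] [IsDomain R]
    [Infinite R] {M : Matrix n n R} (h : ∀ t : R, det (1 + t • M) = 1) : trace M = 0 := by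
  have hpoly : det (1 + (X : R[X]) • M.map C) = 1 :=
    Polynomial.funext fun t ↦ by
      simpa [eval_det, ← smul_eq_mul_diagonal] using h t
  rw [← coeff_det_one_add_X_smul_one, hpoly, coeff_one, if_neg one_ne_zero]

theorem exists_isUnit_det_add_scalar [Infinite K] (M : Matrix n n K) :
    ∃ s : K, IsUnit (M + scalar n s).det := by
  classical
  obtain ⟨s, hs⟩ := Infinite.exists_notMem_finset (-M).charpoly.roots.toFinset
  refine ⟨s, isUnit_iff_ne_zero.mpr ?_⟩
  rw [Multiset.mem_toFinset, mem_roots (charpoly_monic _).ne_zero, IsRoot, eval_charpoly,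
    sub_neg_eq_add, add_comm] at hs
  exact hs

theorem eq_zero_of_forall_isUnit_det_trace_mul_eq_zero [Infinite K] {D : Matrix n n K}
    (h : ∀ M : Matrix n n K, IsUnit M.det → trace (M * D) = 0) : D = 0 := by
  refine ext_iff_trace_mul_left.mpr fun M ↦ ?_
  obtain ⟨s, hs⟩ := exists_isUnit_det_add_scalar M
  have htrace : trace D = 0 := by simpa using h 1 (by simp)
  simpa [add_mul, htrace, ← smul_eq_diagonal_mul] using h _ hs

theorem eq_zero_of_forall_det_add_eq [Infinite K] {D : Matrix n n K}
    (hD : ∀ C, det (D + C) = det C) : D = 0 :=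
  eq_zero_of_forall_isUnit_det_trace_mul_eq_zero fun _ hM ↦
    trace_eq_zero_of_forall_det_one_add_smul_eq_one
      (det_one_add_smul_mul_eq_one_of_forall_det_add_eq hD hM)

theorem eq_of_forall_det_sub_eq [Infinite K] {A B : Matrix n n K}
    (h : ∀ X, det (A - X) = det (B - X)) : A = B := by
  refine sub_eq_zero.mp (eq_zero_of_forall_det_add_eq fun C ↦ ?_)
  simpa [sub_sub_eq_add_sub, sub_add_eq_add_sub] using h (B - C)

end Matrix

/-- Proposition `deg-inj-prop` in the matrix-algebra setting: a complex `n × n` matrix `A`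
is determined by the polynomial function `X ↦ det(A − X)` on all matrices. -/
theorem matrix_determined_by_det_sub
    (n : ℕ) (A B : Matrix (Fin n) (Fin n) ℂ)
    (h : ∀ X : Matrix (Fin n) (Fin n) ℂ, (A - X).det = (B - X).det) :
    A = B :=
  Matrix.eq_of_forall_det_sub_eq h
end

section
/- Let n ≥ 1, let α and β be real symmetric n×n matrices with α positive definite, and set ω = β + iα (an n×n complex matrix). Define the ℝ-linear map κ : ℝⁿ × ℝⁿ → ℂⁿ by κ(u, v) = u − ω·v (where u ∈ ℝⁿ is regarded as a complex vector and ω·v is matrix-vector multiplication). Then: (1) κ is bijective; and (2) for all u, v ∈ ℝⁿ one has κ( −βα⁻¹u + (α + βα⁻¹β)v , −α⁻¹u + α⁻¹βv ) = i·κ(u, v). In particular, the ℝ-linear operator J on ℝⁿ × ℝⁿ given by J(u, v) = (−βα⁻¹u + (α + βα⁻¹β)v, −α⁻¹u + α⁻¹βv) satisfies J² = −id. -/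
/-!
The real and imaginary parts of `u - ωv` are `(u - βv, -αv)`, an invertible linear change of
coordinates because `α` is invertible; followed by the identification `ℝⁿ × ℝⁿ ≃ ℂⁿ` it is `κ`,
which is therefore bijective. In these coordinates `J` becomes the rotation `(x, y) ↦ (-y, x)`,
i.e. multiplication by `i`, and `J² = -id` follows from `i² = -1` and the injectivity of `κ`.
-/

open Matrix Complex

section
variable {ι : Type*}

def reImEquiv : ((ι → ℝ) × (ι → ℝ)) ≃ₗ[ℝ] (ι → ℂ) where
  toFun p i := ⟨p.1 i, p.2 i⟩
  invFun w := (fun i => (w i).re, fun i => (w i).im)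
  map_add' _ _ := rfl
  map_smul' c p := by funext i; apply Complex.ext <;> simp
  left_inv _ := rfl
  right_inv _ := rfl

theorem reImEquiv_eq_I_smul (x y : ι → ℝ) : reImEquiv (x, y) = I • reImEquiv (y, -x) := by
  funext i; apply Complex.ext <;> simp [reImEquiv]

variable [Fintype ι]

theorem ofReal_mulVec_ofReal (M : Matrix ι ι ℝ) (v : ι → ℝ) :
    M.map (↑) *ᵥ (fun i => (v i : ℂ)) = fun i => ((M *ᵥ v) i : ℂ) :=
  funext fun i => (RingHom.map_mulVec ofRealHom M v i).symm

def periodMap (α β : Matrix ι ι ℝ) : ((ι → ℝ) × (ι → ℝ)) →ₗ[ℝ] ((ι → ℝ) × (ι → ℝ)) where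
  toFun p := (p.1 - β *ᵥ p.2, -(α *ᵥ p.2))
  map_add' p q := by
    simp only [Prod.fst_add, Prod.snd_add, mulVec_add, Prod.mk_add_mk]
    congr 1 <;> abel
  map_smul' c p := by simp [mulVec_smul, smul_sub]

theorem ofReal_sub_mulVec_ofReal_eq_reImEquiv (α β : Matrix ι ι ℝ) (u v : ι → ℝ) :
    (fun i => (u i : ℂ)) - (β.map (↑) + I • α.map (↑)) *ᵥ (fun i => (v i : ℂ))
      = reImEquiv (periodMap α β (u, v)) := by
  rw [add_mulVec, smul_mulVec, ofReal_mulVec_ofReal, ofReal_mulVec_ofReal]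
  funext i; apply Complex.ext <;> simp [reImEquiv, periodMap]

variable [DecidableEq ι]

theorem Matrix.mulVec_nonsing_inv_mulVec {R : Type*} [CommRing R] {A : Matrix ι ι R}
    (h : IsUnit A.det) (v : ι → R) :
    A *ᵥ (A⁻¹ *ᵥ v) = v := by
  rw [mulVec_mulVec, mul_nonsing_inv A h, one_mulVec]

theorem Matrix.nonsing_inv_mulVec_mulVec {R : Type*} [CommRing R] {A : Matrix ι ι R}
    (h : IsUnit A.det) (v : ι → R) :
    A⁻¹ *ᵥ (A *ᵥ v) = v := by
  rw [mulVec_mulVec, nonsing_inv_mul A h, one_mulVec]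

variable {α : Matrix ι ι ℝ} (β : Matrix ι ι ℝ)

theorem periodMap_bijective (hα : IsUnit α.det) : Function.Bijective (periodMap α β) := by
  refine Function.bijective_iff_has_inverse.mpr
    ⟨fun q => (q.1 - (β * α⁻¹) *ᵥ q.2, -(α⁻¹ *ᵥ q.2)), fun ⟨u, v⟩ => ?_, fun ⟨x, y⟩ => ?_⟩
  · simp [periodMap, ← mulVec_mulVec, mulVec_neg, nonsing_inv_mulVec_mulVec hα]
  · simp [periodMap, ← mulVec_mulVec, mulVec_neg, mulVec_nonsing_inv_mulVec hα]

theorem periodMap_mirror (hα : IsUnit α.det) (u v : ι → ℝ) :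
    periodMap α β (-((β * α⁻¹) *ᵥ u) + (α + β * α⁻¹ * β) *ᵥ v, -(α⁻¹ *ᵥ u) + (α⁻¹ * β) *ᵥ v)
      = (α *ᵥ v, u - β *ᵥ v) := by
  simp only [periodMap, LinearMap.coe_mk, AddHom.coe_mk, mulVec_add, mulVec_neg, add_mulVec,
    ← mulVec_mulVec, mulVec_nonsing_inv_mulVec hα, Prod.mk.injEq]
  constructor <;> abel

end

theorem mirror_complex_structure_general
    (n : ℕ)
    (α β : Matrix (Fin n) (Fin n) ℝ) (hαpos : α.PosDef)
    (ω : Matrix (Fin n) (Fin n) ℂ)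
    (hω : ω = β.map (fun x => (x : ℂ)) + Complex.I • α.map (fun x => (x : ℂ)))
    (κ : (Fin n → ℝ) × (Fin n → ℝ) → (Fin n → ℂ))
    (hκ : ∀ u v : Fin n → ℝ,
      κ (u, v) = (fun i => (u i : ℂ)) - ω.mulVec (fun i => ((v i : ℂ))))
    (J : (Fin n → ℝ) × (Fin n → ℝ) → (Fin n → ℝ) × (Fin n → ℝ))
    (hJ : ∀ u v : Fin n → ℝ,
      J (u, v) = (-((β * α⁻¹).mulVec u) + (α + β * α⁻¹ * β).mulVec v,
                  -(α⁻¹.mulVec u) + (α⁻¹ * β).mulVec v)) :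
    Function.Bijective κ ∧
      (∀ u v : Fin n → ℝ, κ (J (u, v)) = fun i => Complex.I * κ (u, v) i) ∧
      (∀ p : (Fin n → ℝ) × (Fin n → ℝ), J (J p) = -p) := by
  have hdet : IsUnit α.det := (isUnit_iff_isUnit_det α).mp hαpos.isUnit
  have hκ_eq : κ = reImEquiv.toLinearMap ∘ₗ periodMap α β := by
    funext ⟨u, v⟩
    rw [hκ, hω, ofReal_sub_mulVec_ofReal_eq_reImEquiv]
    rfl
  have hκJ : ∀ p, κ (J p) = I • κ p := by
    rintro ⟨u, v⟩
    rw [hJ, hκ_eq]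
    simp only [LinearMap.coe_comp, Function.comp_apply, LinearEquiv.coe_coe]
    rw [periodMap_mirror β hdet, reImEquiv_eq_I_smul]
    rfl
  have hκ_bij : Function.Bijective κ :=
    hκ_eq ▸ reImEquiv.bijective.comp (periodMap_bijective β hdet)
  refine ⟨hκ_bij, fun u v => hκJ (u, v), fun p => hκ_bij.injective ?_⟩
  rw [hκJ, hκJ, smul_smul, I_mul_I, neg_one_smul, hκ_eq, map_neg]

/-- The computational core of Proposition `mirror-prop`: for real symmetric `n × n`
matrices `α, β` with `α` positive definite and `ω = β + iα`, the `ℝ`-linear map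
`κ(u, v) = u − ω·v` from `ℝⁿ × ℝⁿ` to `ℂⁿ` is bijective, and the operator
`J(u,v) = (−βα⁻¹u + (α + βα⁻¹β)v, −α⁻¹u + α⁻¹βv)` corresponds under `κ` to
multiplication by `i`; in particular `J² = −id`. -/
theorem mirror_complex_structure
    (n : ℕ) (hn : 1 ≤ n)
    (α β : Matrix (Fin n) (Fin n) ℝ) (hα : α.IsSymm) (hβ : β.IsSymm) (hαpos : α.PosDef)
    (ω : Matrix (Fin n) (Fin n) ℂ)
    (hω : ω = β.map (fun x => (x : ℂ)) + Complex.I • α.map (fun x => (x : ℂ)))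
    (κ : (Fin n → ℝ) × (Fin n → ℝ) → (Fin n → ℂ))
    (hκ : ∀ u v : Fin n → ℝ,
      κ (u, v) = (fun i => (u i : ℂ)) - ω.mulVec (fun i => ((v i : ℂ))))
    (J : (Fin n → ℝ) × (Fin n → ℝ) → (Fin n → ℝ) × (Fin n → ℝ))
    (hJ : ∀ u v : Fin n → ℝ,
      J (u, v) = (-((β * α⁻¹).mulVec u) + (α + β * α⁻¹ * β).mulVec v,
                  -(α⁻¹.mulVec u) + (α⁻¹ * β).mulVec v)) :
    Function.Bijective κ ∧
      (∀ u v : Fin n → ℝ, κ (J (u, v)) = fun i => Complex.I * κ (u, v) i) ∧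
      (∀ p : (Fin n → ℝ) × (Fin n → ℝ), J (J p) = -p) :=
  mirror_complex_structure_general n α β hαpos ω hω κ hκ J hJ
end
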